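/- arXiv:1901.05301 — 3 statements merged into one kernel-verified Lean document; each statement's English description precedes it below -/
import Mathlib

section
/- In the factorized model, the marginal smoothed extent density satisfies: ∫ p(ξ_k | Z_{1:K}) dx_k = p(X_k | Z_{1:k}) ∬ [p(X_{k+1} | x_k, X_k) p(X_{k+1} | Z_{1:K}) / p(X_{k+1} | Z_{1:k})] p(x_k | Z_{1:K}) dX_{k+1} dx_k, where p(x_k | Z_{1:K}) is the smoothed marginal kinematic density. -/
open MeasureTheory

/-! The backward-smoothing integrand over `ξ_{k+1} = (x_{k+1}, X_{k+1})` is a product of a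
kinematic factor in `x_{k+1}` and an extent factor in `X_{k+1}`, so by Fubini the joint
integral splits into the product of the two one-dimensional integrals. The kinematic one,
multiplied by `p(x_k | Z_{1:k})`, is exactly `p(x_k | Z_{1:K})`; pulling the constant
`p(X_k | Z_{1:k})` out of the `x_k`-integral gives the claim. -/

theorem integral_prod_mul_div_mul {α β : Type*} [MeasurableSpace α] [MeasurableSpace β]
    {μ : Measure α} {ν : Measure β} [SFinite μ] [SFinite ν]
    (a c e : α → ℝ) (b d f : β → ℝ) :
    ∫ z : α × β, a z.1 * b z.2 * (c z.1 * d z.2) / (e z.1 * f z.2) ∂μ.prod ν =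
      (∫ x, a x * c x / e x ∂μ) * ∫ y, b y * d y / f y ∂ν := by
  rw [← integral_prod_mul]
  congr 1 with z
  ring

theorem factorized_giw_extent_smoothing_general {α β : Type*}
    [MeasureSpace α] [MeasureSpace β]
    [SigmaFinite (volume : Measure α)] [SigmaFinite (volume : Measure β)]
    (fx : α → ℝ) (fX : β → ℝ)
    (tx : α → α → ℝ) (tX : β → α → β → ℝ)
    (px : α → ℝ) (pX : β → ℝ)
    (sx : α → ℝ) (sX : β → ℝ)
    (pK : α → β → ℝ) (sKx : α → ℝ)
    (hpK : ∀ x X, pK x X =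
      fx x * fX X *
        ∫ ξ' : α × β,
          tx ξ'.1 x * tX ξ'.2 x X * (sx ξ'.1 * sX ξ'.2) / (px ξ'.1 * pX ξ'.2))
    (hsKx : ∀ x, sKx x = fx x * ∫ x', tx x' x * sx x' / px x') :
    ∀ X : β, (∫ x, pK x X) =
      fX X * ∫ x, (∫ X', tX X' x X * sX X' / pX X') * sKx x := by
  intro X
  have hpK_split : ∀ x, pK x X = fX X * ((∫ X', tX X' x X * sX X' / pX X') * sKx x) := by
    intro x
    rw [hpK, Measure.volume_eq_prod,
      integral_prod_mul_div_mul (tx · x) sx px (tX · x X) sX pX, hsKx]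
    ring
  simp_rw [hpK_split]
  exact integral_const_mul _ _

/-- Factorized GIW model: the marginal smoothed extent density satisfies
`∫ p(ξ_k | Z_{1:K}) dx_k
  = p(X_k | Z_{1:k}) ∬ [p(X_{k+1} | x_k, X_k) p(X_{k+1} | Z_{1:K}) / p(X_{k+1} | Z_{1:k})]
      p(x_k | Z_{1:K}) dX_{k+1} dx_k`,
where `sKx x = p(x_k | Z_{1:K})` is the smoothed marginal kinematic density. Notation as in
the factorized model: `fx, fX` filtered densities, `tx, tX` transition densities, `px, pX`
predicted densities, `sx, sX` smoothed densities at time `k+1`, `pK` the joint smoothed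
density at time `k`. -/
theorem factorized_giw_extent_smoothing {α β : Type*}
    [MeasureSpace α] [MeasureSpace β]
    [SigmaFinite (volume : Measure α)] [SigmaFinite (volume : Measure β)]
    (fx : α → ℝ) (fX : β → ℝ)
    (tx : α → α → ℝ) (tX : β → α → β → ℝ)
    (px : α → ℝ) (pX : β → ℝ)
    (sx : α → ℝ) (sX : β → ℝ)
    (pK : α → β → ℝ) (sKx : α → ℝ)
    (hpK : ∀ x X, pK x X =
      fx x * fX X *
        ∫ ξ' : α × β,
          tx ξ'.1 x * tX ξ'.2 x X * (sx ξ'.1 * sX ξ'.2) / (px ξ'.1 * pX ξ'.2))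
    (hsKx : ∀ x, sKx x = fx x * ∫ x', tx x' x * sx x' / px x')
    (hintx : ∀ x, Integrable (fun x' => tx x' x * sx x' / px x'))
    (hintX : ∀ x X, Integrable (fun X' => tX X' x X * sX X' / pX X')) :
    ∀ X : β, (∫ x, pK x X) =
      fX X * ∫ x, (∫ X', tX X' x X * sX X' / pX X') * sKx x :=
  factorized_giw_extent_smoothing_general fx fX tx tX px pX sx sX pK sKx hpK hsKx
end

section
/- For the Wishart extent transition W(X_{k+1}; n, A X_k Aᵀ / n) with invertible A and inverse Wishart prior/posterior densities, the moment-matched prediction parameters satisfy v_{k+1|k} = d + 1 + (1 + (v_{k|k} − 2d − 2)/n)^{-1}(v_{k|k} − d − 1) and V_{k+1|k} = (1 + (v_{k|k} − d − 1)/(n − d − 1))^{-1} A V_{k|k} Aᵀ; in particular E[X_{k+1}] under IW(v_{k+1|k}, V_{k+1|k}) equals the prior predictive mean A E[X_k] Aᵀ = A V_{k|k} Aᵀ/(v_{k|k} − 2d − 2). -/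
open Matrix

/-! Writing `s = n + v − 2d − 2`, the predicted degrees of freedom `v'` and the divisor
`c = 1 + (v − d − 1)/(n − d − 1)` of the predicted scale matrix have the closed forms
`v' − 2d − 2 = (n − d − 1)(v − 2d − 2)/s`, `v' − d − 1 = n (v − d − 1)/s` and
`c = s/(n − d − 1)`. Both moment identities then reduce to cancelling `s`, since the inverse
Wishart mean and inverse mean are `V/(v − 2d − 2)` and `(v − d − 1) V⁻¹`. -/

theorem Matrix.inv_smul_of_ne_zero {ι K : Type*} [Fintype ι] [DecidableEq ι] [Field K]
    (M : Matrix ι ι K) {c : K} (hc : c ≠ 0) : (c • M)⁻¹ = c⁻¹ • M⁻¹ := by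
  by_cases hM : IsUnit M.det
  · exact M.inv_smul' (Units.mk0 c hc) hM
  · have hcM : ¬IsUnit (c • M).det := by
      rwa [det_smul, IsUnit.mul_iff, and_iff_right (pow_ne_zero _ hc).isUnit]
    rw [nonsing_inv_apply_not_isUnit _ hM, nonsing_inv_apply_not_isUnit _ hcM, smul_zero]

namespace RandomMatrixPrediction

variable {K : Type*} [Field K] (d n v : K)

/-- The predicted degrees of freedom `v_{k+1|k}`. -/
def predictedDof : K := d + 1 + (1 + (v - 2 * d - 2) / n)⁻¹ * (v - d - 1)

/-- `V_{k+1|k} = (predictedScaleDivisor d n v)⁻¹ • A V_{k|k} Aᵀ`. -/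
def predictedScaleDivisor : K := 1 + (v - d - 1) / (n - d - 1)

variable {d n v}

theorem predictedDof_sub_sub_one (hn : n ≠ 0) :
    predictedDof d n v - d - 1 = n * (v - d - 1) / (n + v - 2 * d - 2) := by
  rw [predictedDof, one_add_div hn, inv_div]
  ring

theorem predictedDof_sub_two_mul_sub_two (hn : n ≠ 0) (hs : n + v - 2 * d - 2 ≠ 0) :
    predictedDof d n v - 2 * d - 2 = (n - d - 1) * (v - 2 * d - 2) / (n + v - 2 * d - 2) :=
  calc predictedDof d n v - 2 * d - 2 = (predictedDof d n v - d - 1) - (d + 1) := by ring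
    _ = n * (v - d - 1) / (n + v - 2 * d - 2) - (d + 1) := by rw [predictedDof_sub_sub_one hn]
    _ = (n - d - 1) * (v - 2 * d - 2) / (n + v - 2 * d - 2) := by rw [div_sub' hs]; ring

theorem predictedScaleDivisor_eq (hnd : n - d - 1 ≠ 0) :
    predictedScaleDivisor d n v = (n + v - 2 * d - 2) / (n - d - 1) := by
  rw [predictedScaleDivisor, one_add_div hnd]
  ring

theorem predicted_mean_eq {ι : Type*} (M : Matrix ι ι K) (hn : n ≠ 0) (hnd : n - d - 1 ≠ 0)
    (hs : n + v - 2 * d - 2 ≠ 0) :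
    (predictedDof d n v - 2 * d - 2)⁻¹ • (predictedScaleDivisor d n v)⁻¹ • M =
      (v - 2 * d - 2)⁻¹ • M := by
  rw [smul_smul, ← mul_inv, predictedDof_sub_two_mul_sub_two hn hs, predictedScaleDivisor_eq hnd,
    div_mul_div_cancel₀ hs, mul_div_cancel_left₀ _ hnd]

theorem predicted_inverse_mean_eq {ι : Type*} [Fintype ι] [DecidableEq ι] (M : Matrix ι ι K)
    (hn : n ≠ 0) (hnd : n - d - 1 ≠ 0) (hs : n + v - 2 * d - 2 ≠ 0) :
    (predictedDof d n v - d - 1) • ((predictedScaleDivisor d n v)⁻¹ • M)⁻¹ =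
      (n / (n - d - 1) * (v - d - 1)) • M⁻¹ := by
  have hc : predictedScaleDivisor d n v ≠ 0 := by
    rw [predictedScaleDivisor_eq hnd]
    exact div_ne_zero hs hnd
  rw [M.inv_smul_of_ne_zero (inv_ne_zero hc), inv_inv, smul_smul, predictedDof_sub_sub_one hn,
    predictedScaleDivisor_eq hnd, div_mul_div_cancel₀ hs, mul_div_right_comm]

end RandomMatrixPrediction

open RandomMatrixPrediction in
theorem random_matrix_prediction_moment_matching_general (d : ℕ) (n v : ℝ)
    (A V : Matrix (Fin d) (Fin d) ℝ)
    (hv : v > 2 * (d : ℝ) + 2) (hn : n > (d : ℝ) + 1) :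
    (((d : ℝ) + 1 + (1 + (v - 2 * (d : ℝ) - 2) / n)⁻¹ * (v - (d : ℝ) - 1)) -
          2 * (d : ℝ) - 2)⁻¹ •
        ((1 + (v - (d : ℝ) - 1) / (n - (d : ℝ) - 1))⁻¹ • (A * V * Aᵀ)) =
      (v - 2 * (d : ℝ) - 2)⁻¹ • (A * V * Aᵀ) ∧
    (((d : ℝ) + 1 + (1 + (v - 2 * (d : ℝ) - 2) / n)⁻¹ * (v - (d : ℝ) - 1)) -
          (d : ℝ) - 1) •
        ((1 + (v - (d : ℝ) - 1) / (n - (d : ℝ) - 1))⁻¹ • (A * V * Aᵀ))⁻¹ =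
      (n / (n - (d : ℝ) - 1) * (v - (d : ℝ) - 1)) • (A * V * Aᵀ)⁻¹ := by
  have hd : (0 : ℝ) ≤ d := d.cast_nonneg
  have hn0 : n ≠ 0 := by linarith
  have hnd : n - d - 1 ≠ 0 := by linarith
  have hs : n + v - 2 * d - 2 ≠ 0 := by linarith
  exact ⟨predicted_mean_eq _ hn0 hnd hs, predicted_inverse_mean_eq _ hn0 hnd hs⟩

/-- Random matrix prediction with Wishart transition `W(X_{k+1}; n, A X_k Aᵀ / n)` and inverse
Wishart posterior `IW(v, V)` at time `k`: the moment-matched predicted parameters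
`v' = d + 1 + (1 + (v − 2d − 2)/n)⁻¹ (v − d − 1)` and
`V' = (1 + (v − d − 1)/(n − d − 1))⁻¹ A V Aᵀ` match both the prior predictive mean
`E[X_{k+1}] = A E[X_k] Aᵀ = A V Aᵀ/(v − 2d − 2)` and the prior predictive inverse mean
`E[X_{k+1}⁻¹] = n/(n−d−1) · (v−d−1) (A V Aᵀ)⁻¹`. -/
theorem random_matrix_prediction_moment_matching (d : ℕ) (n v : ℝ)
    (A V : Matrix (Fin d) (Fin d) ℝ)
    (hv : v > 2 * (d : ℝ) + 2) (hn : n > (d : ℝ) + 1)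
    (hA : IsUnit A.det) (hV : V.PosDef) :
    (((d : ℝ) + 1 + (1 + (v - 2 * (d : ℝ) - 2) / n)⁻¹ * (v - (d : ℝ) - 1)) -
          2 * (d : ℝ) - 2)⁻¹ •
        ((1 + (v - (d : ℝ) - 1) / (n - (d : ℝ) - 1))⁻¹ • (A * V * Aᵀ)) =
      (v - 2 * (d : ℝ) - 2)⁻¹ • (A * V * Aᵀ) ∧
    (((d : ℝ) + 1 + (1 + (v - 2 * (d : ℝ) - 2) / n)⁻¹ * (v - (d : ℝ) - 1)) -
          (d : ℝ) - 1) •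
        ((1 + (v - (d : ℝ) - 1) / (n - (d : ℝ) - 1))⁻¹ • (A * V * Aᵀ))⁻¹ =
      (n / (n - (d : ℝ) - 1) * (v - (d : ℝ) - 1)) • (A * V * Aᵀ)⁻¹ :=
  random_matrix_prediction_moment_matching_general d n v A V hv hn
end

section
/- For positive definite d×d matrices X and X̂, the squared Gaussian Wasserstein distance extent term tr(X + X̂ − 2(X^{1/2} X̂ X^{1/2})^{1/2}) is nonnegative, and it is zero if and only if X = X̂. -/
open Matrix

open scoped ComplexOrder in
/-- The square root of a positive semidefinite matrix, as `Matrix.PosSemidef.sqrt` was defined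
in Mathlib (December 2024); it has since been removed from Mathlib. -/
noncomputable def Matrix.PosSemidef.sqrt {n : Type*} [Fintype n] [DecidableEq n] {𝕜 : Type*}
    [RCLike 𝕜] {A : Matrix n n 𝕜} (hA : A.PosSemidef) : Matrix n n 𝕜 :=
  hA.1.eigenvectorUnitary.1 * diagonal ((↑) ∘ (√·) ∘ hA.1.eigenvalues) *
    (star hA.1.eigenvectorUnitary : Matrix n n 𝕜)

/-!
With `A = X^{1/2}` and `S = (A X̂ A)^{1/2}`, the matrix `C = S A⁻¹` satisfies `Cᴴ C = X̂` and
`tr (A C) = tr S`, so the extent term is `tr ((A - C)ᴴ (A - C))`, the squared Frobenius norm of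
`A - C`. It vanishes iff `A = C`, which gives `X̂ = Cᴴ C = A A = X`; conversely, if `X̂ = X` then
`A X̂ A = X²`, whose positive square root is `X`, so `C = A`.
-/

namespace Matrix

variable {n : Type*} [Fintype n] [DecidableEq n]

section Algebra

variable {R : Type*} [CommRing R] [StarRing R]

theorem conjTranspose_mul_self_mul_inv_eq {A S Y : Matrix n n R} (hA : A.IsHermitian)
    (hS : S.IsHermitian) (hA_det : IsUnit A.det) (hSS : S * S = A * Y * A) :
    (S * A⁻¹)ᴴ * (S * A⁻¹) = Y := by
  rw [conjTranspose_mul, conjTranspose_nonsing_inv, hA.eq, hS.eq]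
  calc A⁻¹ * S * (S * A⁻¹) = A⁻¹ * (S * S) * A⁻¹ := by noncomm_ring
    _ = A⁻¹ * A * Y * (A * A⁻¹) := by rw [hSS]; noncomm_ring
    _ = Y := by rw [nonsing_inv_mul A hA_det, mul_nonsing_inv A hA_det, one_mul, mul_one]

theorem trace_mul_self_add_sub_two_smul_eq_trace_conjTranspose_mul_self {A S Y : Matrix n n R}
    (hA : A.IsHermitian) (hS : S.IsHermitian) (hA_det : IsUnit A.det) (hSS : S * S = A * Y * A) :
    (A * A + Y - (2 : R) • S).trace = ((A - S * A⁻¹)ᴴ * (A - S * A⁻¹)).trace := by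
  have hAC : (A * (S * A⁻¹)).trace = S.trace := by
    rw [trace_mul_comm, mul_assoc, nonsing_inv_mul A hA_det, mul_one]
  have hCA : ((S * A⁻¹)ᴴ * A).trace = S.trace := by
    rw [conjTranspose_mul, conjTranspose_nonsing_inv, hA.eq, hS.eq, trace_mul_comm, ← mul_assoc,
      mul_nonsing_inv A hA_det, one_mul]
  rw [conjTranspose_sub, hA.eq, sub_mul, mul_sub, mul_sub,
    conjTranspose_mul_self_mul_inv_eq hA hS hA_det hSS]
  simp only [trace_sub, trace_add, trace_smul, hAC, hCA, smul_eq_mul]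
  ring

end Algebra

namespace PosSemidef

open scoped MatrixOrder

theorem sqrt_eq_cfcSqrt {A : Matrix n n ℝ} (hA : A.PosSemidef) : hA.sqrt = CFC.sqrt A := by
  rw [CFC.sqrt_eq_real_sqrt A hA.nonneg, cfcₙ_eq_cfc, hA.1.cfc_eq, IsHermitian.cfc,
    Unitary.conjStarAlgAut_apply]
  rfl

theorem posSemidef_sqrt {A : Matrix n n ℝ} (hA : A.PosSemidef) : hA.sqrt.PosSemidef := by
  rw [hA.sqrt_eq_cfcSqrt]
  exact (CFC.sqrt_nonneg A).posSemidef

theorem sqrt_mul_sqrt {A : Matrix n n ℝ} (hA : A.PosSemidef) : hA.sqrt * hA.sqrt = A := by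
  rw [hA.sqrt_eq_cfcSqrt]
  exact CFC.sqrt_mul_sqrt_self A hA.nonneg

theorem sqrt_eq_of_mul_self_eq {A B : Matrix n n ℝ} (hA : A.PosSemidef) (hB : B.PosSemidef)
    (h : B * B = A) : hA.sqrt = B := by
  rw [hA.sqrt_eq_cfcSqrt]
  exact CFC.sqrt_unique h hB.nonneg

end PosSemidef

theorem PosDef.isUnit_det_sqrt {X : Matrix n n ℝ} (hX : X.PosDef) :
    IsUnit hX.posSemidef.sqrt.det := by
  refine isUnit_iff_ne_zero.mpr fun h => hX.det_pos.ne' ?_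
  rw [← hX.posSemidef.sqrt_mul_sqrt, det_mul, h, zero_mul]

end Matrix

theorem gwd_extent_term_nonneg_and_eq_zero_iff_general {d : ℕ}
    (X Y : Matrix (Fin d) (Fin d) ℝ) (hX : X.PosDef)
    (hXY : (hX.posSemidef.sqrt * Y * hX.posSemidef.sqrt).PosSemidef) :
    0 ≤ (X + Y - (2 : ℝ) • hXY.sqrt).trace ∧
      ((X + Y - (2 : ℝ) • hXY.sqrt).trace = 0 ↔ X = Y) := by
  set A := hX.posSemidef.sqrt
  set S := hXY.sqrt
  have hA := hX.posSemidef.posSemidef_sqrt.isHermitian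
  have hS := hXY.posSemidef_sqrt.isHermitian
  have hAA : A * A = X := hX.posSemidef.sqrt_mul_sqrt
  have hSS : S * S = A * Y * A := hXY.sqrt_mul_sqrt
  have hA_det := hX.isUnit_det_sqrt
  have key : (X + Y - (2 : ℝ) • S).trace = ((A - S * A⁻¹)ᴴ * (A - S * A⁻¹)).trace := by
    rw [← hAA]
    exact trace_mul_self_add_sub_two_smul_eq_trace_conjTranspose_mul_self hA hS hA_det hSS
  refine ⟨key ▸ (posSemidef_conjTranspose_mul_self _).trace_nonneg, ?_⟩
  rw [key, trace_conjTranspose_mul_self_eq_zero_iff, sub_eq_zero]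
  constructor
  · intro hAC
    rw [← conjTranspose_mul_self_mul_inv_eq hA hS hA_det hSS, ← hAC, hA.eq, hAA]
  · rintro rfl
    have hSX : S = X := hXY.sqrt_eq_of_mul_self_eq hX.posSemidef (by rw [← hAA]; noncomm_ring)
    rw [hSX, ← hAA, mul_assoc, mul_nonsing_inv A hA_det, mul_one]

/-- The extent term of the squared Gaussian Wasserstein distance,
`tr(X + X̂ − 2 (X^{1/2} X̂ X^{1/2})^{1/2})`, is nonnegative, and it is zero if and only if
`X = X̂`. Here `hXY` provides the (always valid) positive semidefiniteness of
`X^{1/2} X̂ X^{1/2}` whose square root appears in the formula. -/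
theorem gwd_extent_term_nonneg_and_eq_zero_iff {d : ℕ}
    (X Y : Matrix (Fin d) (Fin d) ℝ) (hX : X.PosDef) (hY : Y.PosDef)
    (hXY : (hX.posSemidef.sqrt * Y * hX.posSemidef.sqrt).PosSemidef) :
    0 ≤ (X + Y - (2 : ℝ) • hXY.sqrt).trace ∧
      ((X + Y - (2 : ℝ) • hXY.sqrt).trace = 0 ↔ X = Y) :=
  gwd_extent_term_nonneg_and_eq_zero_iff_general X Y hX hXY
end
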